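/- For every integer n ≥ 1 one has M(2n) = (a·b)ⁿ · (a⁻¹·c)^(n(n−1)). (In the paper this computation shows that the 2-Veronese of the twisted coordinate ℤ-algebra attached to (E, ℒ₁, ℒ₂, ℒ₃) is the twisted coordinate ℤ-algebra attached to the pair (E, ℒ₁⊗ℒ₂, ℒ₂⊗ℒ₃).) -/
import Mathlib

/-- With `ℓ` as in Statement 0 and `M m = ∏_{i=1}^m ℓ i`, one has
`M (2n) = (a*b)^n * (a⁻¹*c)^(n(n-1))` for every `n ≥ 1`. -/
theorem stmt1 {G : Type*} [CommGroup G] (a b c : G) (ℓ : ℕ → G)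
    (h1 : ℓ 1 = a) (h2 : ℓ 2 = b) (h3 : ℓ 3 = c)
    (hrec : ∀ i : ℕ, 4 ≤ i → ℓ i = (ℓ (i - 3))⁻¹ * ℓ (i - 2) * ℓ (i - 1)) :
    ∀ n : ℕ, 1 ≤ n →
      ∏ i ∈ Finset.Icc 1 (2 * n), ℓ i = (a * b) ^ n * (a⁻¹ * c) ^ (n * (n - 1)) := by
  obtain ⟨d, hd⟩ : ∃ d, d = a⁻¹ * c := ⟨_, rfl⟩
  have hc : c = a * d := by rw [hd, mul_inv_cancel_left]
  -- closed form for ℓ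
  have key : ∀ m : ℕ, (ℓ (2 * m + 1) = a * d ^ m ∧ ℓ (2 * m + 2) = b * d ^ m) ∧
      (ℓ (2 * m + 3) = a * d ^ (m + 1) ∧ ℓ (2 * m + 4) = b * d ^ (m + 1)) := by
    intro m
    induction m with
    | zero =>
      have e3 : ℓ 3 = a * d ^ 1 := by rw [h3, hc, pow_one]
      have e4 : ℓ 4 = b * d ^ 1 := by
        have := hrec 4 (by norm_num)
        simp only [show 4 - 3 = 1 from rfl, show 4 - 2 = 2 from rfl,
          show 4 - 1 = 3 from rfl] at this
        rw [this, h1, h2, h3, hc, pow_one]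
        simp [mul_comm, mul_left_comm, mul_assoc]
      exact ⟨⟨by simpa using h1, by simpa using h2⟩, ⟨by simpa using e3, by simpa using e4⟩⟩
    | succ m ih =>
      obtain ⟨⟨_, e2⟩, e3, e4⟩ := ih
      have e5 : ℓ (2 * m + 5) = a * d ^ (m + 2) := by
        have := hrec (2 * m + 5) (by omega)
        have s1 : 2 * m + 5 - 3 = 2 * m + 2 := by omega
        have s2 : 2 * m + 5 - 2 = 2 * m + 3 := by omega
        have s3 : 2 * m + 5 - 1 = 2 * m + 4 := by omega
        rw [s1, s2, s3, e2, e3, e4] at this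
        rw [this, mul_assoc, inv_mul_eq_iff_eq_mul, pow_succ, pow_succ, pow_succ]
        simp [mul_comm, mul_left_comm, mul_assoc]
      have e6 : ℓ (2 * m + 6) = b * d ^ (m + 2) := by
        have := hrec (2 * m + 6) (by omega)
        have s1 : 2 * m + 6 - 3 = 2 * m + 3 := by omega
        have s2 : 2 * m + 6 - 2 = 2 * m + 4 := by omega
        have s3 : 2 * m + 6 - 1 = 2 * m + 5 := by omega
        rw [s1, s2, s3, e3, e4, e5] at this
        rw [this, mul_assoc, inv_mul_eq_iff_eq_mul, pow_succ, pow_succ, pow_succ]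
        simp [mul_comm, mul_left_comm, mul_assoc]
      have i1 : 2 * (m + 1) + 1 = 2 * m + 3 := by omega
      have i2 : 2 * (m + 1) + 2 = 2 * m + 4 := by omega
      have i3 : 2 * (m + 1) + 3 = 2 * m + 5 := by omega
      have i4 : 2 * (m + 1) + 4 = 2 * m + 6 := by omega
      exact ⟨⟨by rw [i1]; exact e3, by rw [i2]; exact e4⟩,
        by rw [i3]; exact e5, by rw [i4]; exact e6⟩
  have oddf : ∀ m : ℕ, ℓ (2 * m + 1) = a * d ^ m := fun m => ((key m).1).1
  have evenf : ∀ m : ℕ, ℓ (2 * m + 2) = b * d ^ m := fun m => ((key m).1).2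
  intro n hn
  rw [← hd]
  induction n with
  | zero => omega
  | succ n ih =>
    rcases Nat.eq_zero_or_pos n with rfl | hpos
    · have : Finset.Icc 1 2 = {1, 2} := by decide
      simp [this, h1, h2]
    · have ihv := ih hpos
      have step : Finset.Icc 1 (2 * (n + 1)) =
          insert (2 * n + 2) (insert (2 * n + 1) (Finset.Icc 1 (2 * n))) := by
        ext x
        simp only [Finset.mem_Icc, Finset.mem_insert]
        omega
      rw [step, Finset.prod_insert (by
          simp only [Finset.mem_insert, Finset.mem_Icc]; omega),
        Finset.prod_insert (by simp only [Finset.mem_Icc]; omega), ihv, evenf n, oddf n]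
      have hexp : (n + 1) * (n + 1 - 1) = n * (n - 1) + n + n := by
        cases n with
        | zero => omega
        | succ k => simp; ring
      rw [hexp, pow_succ (a * b), pow_add, pow_add]
      simp [mul_comm, mul_left_comm, mul_assoc]
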